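/- Let Z be a local ring with infinite residue field and let C be an arbitrary Z-algebra. Let I := (f₁,…,f_n)C be a finitely generated ideal of C and let 𝔞₁,…,𝔞_t be ideals of C none of which contains I. If W denotes the Z-submodule of C generated by f₁,…,f_n, then there exists f ∈ W not contained in any of the ideals 𝔞₁,…,𝔞_t. -/

import Mathlib

/-!
Common infrastructure: ultraproducts of rings, presentations of local affine algebras
over a base, approximations, and the relevant local-algebra invariants
(geometric dimension, generic sequences, grade/depth, quasi-singularities,
complexity bounds over discrete valuation rings).
-/

open Filter

section Ultraproduct

variable {ι : Type} (U : Ultrafilter ι)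

/-- The ideal of families vanishing on a set of indices belonging to the ultrafilter. -/
def uIdeal (C : ι → Type*) [∀ i, CommRing (C i)] : Ideal (∀ i, C i) where
  carrier := {f | ∀ᶠ i in (U : Filter ι), f i = 0}
  add_mem' := by
    intro a b ha hb
    filter_upwards [ha, hb] with i h1 h2
    show a i + b i = 0
    rw [h1, h2, add_zero]
  zero_mem' := by filter_upwards with i; rfl
  smul_mem' := by
    intro c a ha
    filter_upwards [ha] with i h
    show c i * a i = 0
    rw [h, mul_zero]

/-- The ultraproduct of a family of commutative rings with respect to `U`. -/
abbrev Ultra (C : ι → Type*) [∀ i, CommRing (C i)] : Type _ := (∀ i, C i) ⧸ uIdeal U C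

/-- The canonical projection onto the ultraproduct. -/
def uMk (C : ι → Type*) [∀ i, CommRing (C i)] : (∀ i, C i) →+* Ultra U C :=
  Ideal.Quotient.mk (uIdeal U C)

/-- The homomorphism of ultraproducts induced by componentwise homomorphisms. -/
def uMap {C D : ι → Type*} [∀ i, CommRing (C i)] [∀ i, CommRing (D i)]
    (g : ∀ i, C i →+* D i) : Ultra U C →+* Ultra U D :=
  Ideal.Quotient.lift (uIdeal U C)
    ((uMk U D).comp (Pi.ringHom fun i => (g i).comp (Pi.evalRingHom C i)))
    (by
      intro a ha
      have ha' : ∀ᶠ i in (U : Filter ι), a i = 0 := ha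
      rw [RingHom.comp_apply, uMk, Ideal.Quotient.eq_zero_iff_mem]
      have : ∀ᶠ i in (U : Filter ι),
          (Pi.ringHom fun i => (g i).comp (Pi.evalRingHom C i)) a i = 0 := by
        filter_upwards [ha'] with i h
        show (g i) (a i) = 0
        rw [h, map_zero]
      exact this)

/-- The ultraproduct of a family of ideals: the ideal generated by the ultraproducts of
families of elements of the given ideals. -/
def uIdealOf (C : ι → Type*) [∀ i, CommRing (C i)] (Iw : ∀ i, Ideal (C i)) :
    Ideal (Ultra U C) :=
  Ideal.span {x | ∃ f : ∀ i, C i, (∀ i, f i ∈ Iw i) ∧ x = uMk U C f}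

/-- The canonical embedding of the polynomial ring over the ultraproduct into the
ultraproduct of the polynomial rings. -/
noncomputable def polyToUl (C : ι → Type*) [∀ i, CommRing (C i)] (n : ℕ) :
    MvPolynomial (Fin n) (Ultra U C) →+* Ultra U (fun i => MvPolynomial (Fin n) (C i)) :=
  MvPolynomial.eval₂Hom
    (uMap U fun i => (MvPolynomial.C : C i →+* MvPolynomial (Fin n) (C i)))
    (fun j => uMk U (fun i => MvPolynomial (Fin n) (C i)) (fun _ => MvPolynomial.X j))

end Ultraproduct

section Invariants

variable (R : Type*) [CommRing R]

/-- The geometric dimension of a local ring: the minimal length of a tuple generating an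
ideal primary to the maximal ideal. -/
noncomputable def geomDim [IsLocalRing R] : ℕ :=
  sInf {d | ∃ x : Fin d → R,
    (Ideal.span (Set.range x)).radical = IsLocalRing.maximalIdeal R}

/-- A generic sequence: a tuple generating an ideal primary to the maximal ideal, whose
length equals the geometric dimension. -/
def IsGenericSeq [IsLocalRing R] {d : ℕ} (x : Fin d → R) : Prop :=
  (Ideal.span (Set.range x)).radical = IsLocalRing.maximalIdeal R ∧ d = geomDim R

/-- The grade of an ideal `J` of `R` (Koszul grade, equivalently the `true' grade):
the supremum of lengths of regular sequences contained in the extension of `J` to a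
polynomial extension of `R`. -/
noncomputable def pGrade (J : Ideal R) : ℕ∞ :=
  ⨆ n ∈ {n : ℕ | ∃ (m : ℕ) (rs : List (MvPolynomial (Fin m) R)),
      rs.length = n ∧
      (∀ x ∈ rs, x ∈ J.map (MvPolynomial.C : R →+* MvPolynomial (Fin m) R)) ∧
      RingTheory.Sequence.IsRegular (MvPolynomial (Fin m) R) rs}, (n : ℕ∞)

/-- The depth of a local ring: the grade of its maximal ideal. -/
noncomputable def ringDepth [IsLocalRing R] : ℕ∞ :=
  pGrade R (IsLocalRing.maximalIdeal R)

/-- A local ring is quasi-Cohen–Macaulay if its depth equals its geometric dimension. -/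
def IsQuasiCM [IsLocalRing R] : Prop :=
  ringDepth R = (geomDim R : ℕ∞)

/-- The embedding dimension of a local ring: the minimal number of generators of its
maximal ideal. -/
noncomputable def embDim [IsLocalRing R] : ℕ :=
  sInf {k | ∃ x : Fin k → R, Ideal.span (Set.range x) = IsLocalRing.maximalIdeal R}

/-- A local ring is quasi-regular if its embedding dimension equals its geometric
dimension. -/
def IsQuasiRegular [IsLocalRing R] : Prop :=
  embDim R = geomDim R

/-- A Cohen–Macaulay local ring: a Noetherian local ring whose depth equals its Krull
dimension. -/
def IsCMLocalRing [IsLocalRing R] : Prop :=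
  IsNoetherianRing R ∧ ((ringDepth R : ℕ∞) : WithBot ℕ∞) = ringKrullDim R

/-- A regular local ring: a Noetherian local ring whose embedding dimension equals its
Krull dimension. -/
def IsRegularLocal [IsLocalRing R] : Prop :=
  IsNoetherianRing R ∧ ((embDim R : ℕ∞) : WithBot ℕ∞) = ringKrullDim R

/-- The length of a module, as the Krull dimension of its lattice of submodules. -/
noncomputable def modLength (M : Type*) [AddCommGroup M] [Module R M] : WithBot ℕ∞ :=
  Order.krullDim (Submodule R M)

/-- A system of parameters of a Noetherian local ring: a tuple of length equal to the
Krull dimension generating an ideal primary to the maximal ideal. -/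
def IsSOP [IsLocalRing R] {k : ℕ} (x : Fin k → R) : Prop :=
  (Ideal.span (Set.range x)).radical = IsLocalRing.maximalIdeal R ∧
    (k : WithBot ℕ∞) = ringKrullDim R

/-- The parameter degree of a Noetherian local ring is at most `e`: some system of
parameters generates an ideal whose residue ring has length at most `e`. -/
def ParamDegLE (e : ℕ) : Prop :=
  ∃ (k : ℕ) (x : Fin k → R) (J : Ideal R), J.IsMaximal ∧
    (Ideal.span (Set.range x)).radical = J ∧
    (k : WithBot ℕ∞) = ringKrullDim R ∧
    modLength R (R ⧸ Ideal.span (Set.range x)) ≤ ((e : ℕ∞) : WithBot ℕ∞)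

/-- The height of an ideal: the infimum of the heights of the primes containing it. -/
noncomputable def idealHeight (I : Ideal R) : ℕ∞ :=
  ⨅ (p : PrimeSpectrum R) (_ : I ≤ p.asIdeal), Order.height p

/-- The quasi-height of an ideal `J` of a local ring: the maximum `h` such that some
generic sequence has its first `h` entries in `J`. -/
noncomputable def qHeight [IsLocalRing R] (J : Ideal R) : ℕ :=
  sSup {h | ∃ (d : ℕ) (x : Fin d → R), IsGenericSeq R x ∧ h ≤ d ∧
    ∀ j : Fin d, (j : ℕ) < h → x j ∈ J}

end Invariants

section LocalAffine

/-- A presentation of a local algebra over a base `(𝒪, π)`, locally finitely generated: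
`R = (𝒪[X₁,…,X_n]/I)_𝔪` with `𝔪` a prime ideal containing `I` and `π`. -/
structure LocPres (𝒪 : Type) [CommRing 𝒪] (π : 𝒪) where
  n : ℕ
  I : Ideal (MvPolynomial (Fin n) 𝒪)
  m : Ideal (MvPolynomial (Fin n) 𝒪)
  hIm : I ≤ m
  hprime : m.IsPrime
  hπ : MvPolynomial.C π ∈ m

namespace LocPres

variable {𝒪 : Type} [CommRing 𝒪] {π : 𝒪} (P : LocPres 𝒪 π)

/-- The prime ideal of `𝒪[X]/I` at which we localize. -/
noncomputable def q : Ideal (MvPolynomial (Fin P.n) 𝒪 ⧸ P.I) := P.m.map (Ideal.Quotient.mk P.I)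

instance : P.q.IsPrime := by
  haveI := P.hprime
  exact Ideal.map_isPrime_of_surjective Ideal.Quotient.mk_surjective
    (by rw [Ideal.mk_ker]; exact P.hIm)

/-- The local algebra `(𝒪[X]/I)_𝔪` presented by `P`. -/
def R : Type _ := Localization.AtPrime P.q

noncomputable instance : CommRing P.R := inferInstanceAs (CommRing (Localization.AtPrime P.q))
instance : IsLocalRing P.R := inferInstanceAs (IsLocalRing (Localization.AtPrime P.q))

/-- The canonical homomorphism from the polynomial ring to `P.R`. -/
noncomputable def θ : MvPolynomial (Fin P.n) 𝒪 →+* P.R :=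
  (algebraMap (MvPolynomial (Fin P.n) 𝒪 ⧸ P.I) (Localization.AtPrime P.q)).comp
    (Ideal.Quotient.mk P.I)

/-- The canonical homomorphism from the base ring to `P.R`. -/
noncomputable def ρ : 𝒪 →+* P.R := P.θ.comp MvPolynomial.C

/-- `P.R` is torsion-free over the base ring. -/
def TorsionFree : Prop := ∀ (x : 𝒪) (r : P.R), x ≠ 0 → P.ρ x * r = 0 → r = 0

end LocPres

end LocalAffine

section Approximation

variable {ι : Type} (U : Ultrafilter ι) (O : ι → Type) [∀ i, CommRing (O i)]

/-- A family of ideals `Jw` approximates an ideal `J` of the polynomial ring over the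
ultraproduct if there is a common finite tuple of generating polynomials `g j` for `J`
which are the ultraproducts of polynomials `gw j` generating almost all `Jw i`. -/
def IsIdealApprox (n : ℕ) (J : Ideal (MvPolynomial (Fin n) (Ultra U O)))
    (Jw : ∀ i, Ideal (MvPolynomial (Fin n) (O i))) : Prop :=
  ∃ (k : ℕ) (g : Fin k → MvPolynomial (Fin n) (Ultra U O))
    (gw : Fin k → ∀ i, MvPolynomial (Fin n) (O i)),
    (∀ j, polyToUl U O n (g j) = uMk U (fun i => MvPolynomial (Fin n) (O i)) (gw j)) ∧
    J = Ideal.span (Set.range g) ∧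
    ∀ᶠ i in (U : Filter ι), Jw i = Ideal.span (Set.range fun j => gw j i)

variable {π : Ultra U O}

/-- An approximation of a local affine algebra over the ultraproduct: componentwise
presentations whose defining ideals and primes approximate those of `P`. -/
structure Approx (P : LocPres (Ultra U O) π) where
  I : ∀ i, Ideal (MvPolynomial (Fin P.n) (O i))
  m : ∀ i, Ideal (MvPolynomial (Fin P.n) (O i))
  hIm : ∀ i, I i ≤ m i
  hprime : ∀ i, (m i).IsPrime
  happI : IsIdealApprox U O P.n P.I I
  happm : IsIdealApprox U O P.n P.m m

namespace Approx

variable {U O} {P : LocPres (Ultra U O) π} (a : Approx U O P)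

noncomputable def qw (i : ι) : Ideal (MvPolynomial (Fin P.n) (O i) ⧸ a.I i) :=
  (a.m i).map (Ideal.Quotient.mk (a.I i))

instance (i : ι) : (a.qw i).IsPrime := by
  haveI := a.hprime i
  exact Ideal.map_isPrime_of_surjective Ideal.Quotient.mk_surjective
    (by rw [Ideal.mk_ker]; exact a.hIm i)

/-- The component local rings `R_w` of the approximation. -/
def Rw (i : ι) : Type _ := Localization.AtPrime (a.qw i)

noncomputable instance (i : ι) : CommRing (a.Rw i) :=
  inferInstanceAs (CommRing (Localization.AtPrime (a.qw i)))
instance (i : ι) : IsLocalRing (a.Rw i) :=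
  inferInstanceAs (IsLocalRing (Localization.AtPrime (a.qw i)))

noncomputable def θw (i : ι) : MvPolynomial (Fin P.n) (O i) →+* a.Rw i :=
  (algebraMap (MvPolynomial (Fin P.n) (O i) ⧸ a.I i) (Localization.AtPrime (a.qw i))).comp
    (Ideal.Quotient.mk (a.I i))

noncomputable def ρw (i : ι) : O i →+* a.Rw i := (a.θw i).comp MvPolynomial.C

/-- A ring homomorphism `R → ulR` into the ultraproduct of the approximation (the
non-standard hull) is the canonical one when it is compatible with the formation of
ultraproducts of polynomials. -/
def IsHullMap (ρ : P.R →+* Ultra U a.Rw) : Prop :=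
  ∀ (f : MvPolynomial (Fin P.n) (Ultra U O)) (fw : ∀ i, MvPolynomial (Fin P.n) (O i)),
    polyToUl U O P.n f = uMk U (fun i => MvPolynomial (Fin P.n) (O i)) fw →
    ρ (P.θ f) = uMk U a.Rw (fun i => a.θw i (fw i))

/-- The approximation witnesses that `R` is isodimensional: almost all components have
Krull dimension equal to the geometric dimension of `R`. -/
def IsoDimensional : Prop :=
  ∀ᶠ i in (U : Filter ι), ringKrullDim (a.Rw i) = (geomDim P.R : WithBot ℕ∞)

/-- An element of a component ring has complexity at most `c` if it is a fraction of
polynomials of degree at most `c`. -/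
def ElemCplxW (i : ι) (r : a.Rw i) (c : ℕ) : Prop :=
  ∃ p q : MvPolynomial (Fin P.n) (O i), p.totalDegree ≤ c ∧ q.totalDegree ≤ c ∧
    q ∉ a.m i ∧ r * a.θw i q = a.θw i p

/-- A family of ideals of the component rings approximates a finitely generated ideal of
`R`: both are generated by the images of matching families of polynomials. -/
def IsRIdealApprox (J : Ideal P.R) (Jw : ∀ i, Ideal (a.Rw i)) : Prop :=
  ∃ (k : ℕ) (g : Fin k → MvPolynomial (Fin P.n) (Ultra U O))
    (gw : Fin k → ∀ i, MvPolynomial (Fin P.n) (O i)),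
    (∀ j, polyToUl U O P.n (g j) = uMk U (fun i => MvPolynomial (Fin P.n) (O i)) (gw j)) ∧
    J = Ideal.span (Set.range fun j => P.θ (g j)) ∧
    ∀ᶠ i in (U : Filter ι), Jw i = Ideal.span (Set.range fun j => a.θw i (gw j i))

end Approx

end Approximation

section Complexity

/-- A presentation of `V`-complexity at most `c` of a local affine algebra over a
Noetherian local base `V`: at most `c` variables, and the defining ideal and prime are
generated by polynomials of degree at most `c`; the prime contains the defining ideal
and the maximal ideal of `V`. -/
structure BddPres (V : Type) [CommRing V] [IsLocalRing V] (c : ℕ) where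
  n : ℕ
  hn : n ≤ c
  I : Ideal (MvPolynomial (Fin n) V)
  m : Ideal (MvPolynomial (Fin n) V)
  hIm : I ≤ m
  hprime : m.IsPrime
  hmax : ∀ z ∈ IsLocalRing.maximalIdeal V, MvPolynomial.C z ∈ m
  hIgen : ∃ G : Finset (MvPolynomial (Fin n) V),
    (∀ g ∈ G, g.totalDegree ≤ c) ∧ Ideal.span (G : Set (MvPolynomial (Fin n) V)) = I
  hmgen : ∃ G : Finset (MvPolynomial (Fin n) V),
    (∀ g ∈ G, g.totalDegree ≤ c) ∧ Ideal.span (G : Set (MvPolynomial (Fin n) V)) = m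

namespace BddPres

variable {V : Type} [CommRing V] [IsLocalRing V] {c : ℕ} (P : BddPres V c)

noncomputable def q : Ideal (MvPolynomial (Fin P.n) V ⧸ P.I) := P.m.map (Ideal.Quotient.mk P.I)

instance : P.q.IsPrime := by
  haveI := P.hprime
  exact Ideal.map_isPrime_of_surjective Ideal.Quotient.mk_surjective
    (by rw [Ideal.mk_ker]; exact P.hIm)

/-- The local algebra presented by `P`. -/
def R : Type _ := Localization.AtPrime P.q

noncomputable instance : CommRing P.R := inferInstanceAs (CommRing (Localization.AtPrime P.q))
instance : IsLocalRing P.R := inferInstanceAs (IsLocalRing (Localization.AtPrime P.q))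

noncomputable def θ : MvPolynomial (Fin P.n) V →+* P.R :=
  (algebraMap (MvPolynomial (Fin P.n) V ⧸ P.I) (Localization.AtPrime P.q)).comp
    (Ideal.Quotient.mk P.I)

noncomputable def ρ : V →+* P.R := P.θ.comp MvPolynomial.C

/-- An element of `P.R` has `V`-complexity at most `c'`: it is a fraction `p/q` of
polynomials of degree at most `c'` with `q` outside the prime `𝔪`. -/
def ElemCplx (r : P.R) (c' : ℕ) : Prop :=
  ∃ p q : MvPolynomial (Fin P.n) V, p.totalDegree ≤ c' ∧ q.totalDegree ≤ c' ∧
    q ∉ P.m ∧ r * P.θ q = P.θ p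

/-- `P.R` is torsion-free over `V`. -/
def TorsionFree : Prop := ∀ (x : V) (r : P.R), x ≠ 0 → P.ρ x * r = 0 → r = 0

end BddPres

/-- A homomorphism between presented local algebras has `V`-complexity at most `c` if it
sends each variable to an element of complexity at most `c`. -/
def HomCplx {V : Type} [CommRing V] [IsLocalRing V] {c : ℕ} (P Q : BddPres V c)
    (f : P.R →+* Q.R) (c' : ℕ) : Prop :=
  ∀ j : Fin P.n, Q.ElemCplx (f (P.θ (MvPolynomial.X j))) c'

/-- The expected rank of the `i`-th map in a finite free complex of length `s` with free
modules of ranks `a j`. -/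
def expectedRank (s : ℕ) (a : ℕ → ℕ) (i : ℕ) : ℕ :=
  (∑ j ∈ Finset.Icc i s, (-1 : ℤ) ^ (j - i) * (a j : ℤ)).toNat

/-- The ideal of `r × r` minors of a matrix. -/
def fittingIdealM {R : Type*} [CommRing R] {k l : ℕ} (r : ℕ) (M : Matrix (Fin k) (Fin l) R) :
    Ideal R :=
  Ideal.span {x | ∃ (f : Fin r → Fin k) (g : Fin r → Fin l), x = ((M.submatrix f g).det)}

end Complexity

section Statements

open Filter IsLocalRing

set_option synthInstance.maxHeartbeats 1000000
set_option maxHeartbeats 1000000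

/-- Controlled ideal avoidance. -/
theorem statement19 (Z : Type*) [CommRing Z] [IsLocalRing Z]
    (hinf : Infinite (ResidueField Z))
    (C : Type*) [CommRing C] [Algebra Z C] (n : ℕ) (f : Fin n → C)
    (t : ℕ) (a : Fin t → Ideal C)
    (ha : ∀ j, ¬ Ideal.span (Set.range f) ≤ a j) :
    ∃ z : Fin n → Z, ∀ j, (∑ i, z i • f i) ∉ a j := by
  classical
  have ha' : ∀ j, ∃ i, f i ∉ a j := by
    intro j
    by_contra h
    push_neg at h
    exact ha j (Ideal.span_le.mpr (by rintro x ⟨i, rfl⟩; exact h i))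
  set k := ResidueField Z with hk
  let S : Fin t → Submodule Z (Fin n → Z) := fun j =>
    { carrier := {z | (∑ i, z i • f i) ∈ a j}
      zero_mem' := by simp
      add_mem' := by
        intro x y hx hy
        have hxy : (∑ i, (x + y) i • f i) = (∑ i, x i • f i) + ∑ i, y i • f i := by
          rw [← Finset.sum_add_distrib]
          exact Finset.sum_congr rfl fun i _ => by simp [add_smul]
        show (∑ i, (x + y) i • f i) ∈ a j
        rw [hxy]; exact (a j).add_mem hx hy
      smul_mem' := by
        intro c z hz
        have hcz : (∑ i, (c • z) i • f i) = c • ∑ i, z i • f i := by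
          rw [Finset.smul_sum]
          exact Finset.sum_congr rfl fun i _ => by simp [mul_smul]
        show (∑ i, (c • z) i • f i) ∈ a j
        rw [hcz, Algebra.smul_def]
        exact Ideal.mul_mem_left _ _ hz }
  have hSne : ∀ j, S j ≠ ⊤ := by
    intro j hj
    obtain ⟨i, hi⟩ := ha' j
    have : Pi.single i (1 : Z) ∈ S j := hj ▸ Submodule.mem_top
    have h2 : (∑ i', (Pi.single i (1 : Z) : Fin n → Z) i' • f i') = f i := by
      rw [Finset.sum_eq_single i]
      · simp
      · intro b _ hb; simp [Pi.single_apply, hb]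
      · intro hb; exact absurd (Finset.mem_univ i) hb
    exact hi (h2 ▸ this)
  let ψ : (Fin n → Z) → (Fin n → k) := fun z i => residue Z (z i)
  let T : Fin t → Submodule k (Fin n → k) := fun j =>
    { carrier := {v | ∃ z ∈ S j, ψ z = v}
      zero_mem' := ⟨0, (S j).zero_mem, by funext i; simp [ψ]⟩
      add_mem' := by
        rintro x y ⟨z, hz, rfl⟩ ⟨w, hw, rfl⟩
        exact ⟨z + w, (S j).add_mem hz hw, by funext i; simp [ψ]⟩
      smul_mem' := by
        rintro c v ⟨z, hz, rfl⟩
        obtain ⟨c', rfl⟩ := residue_surjective (R := Z) c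
        exact ⟨c' • z, (S j).smul_mem c' hz, by funext i; simp [ψ]⟩ }
  have hTne : ∀ j, T j ≠ ⊤ := by
    intro j hj
    apply hSne j
    have hle : (⊤ : Submodule Z (Fin n → Z)) ≤ S j ⊔ (maximalIdeal Z) • ⊤ := by
      intro z _
      have : ψ z ∈ T j := hj ▸ Submodule.mem_top
      obtain ⟨z', hz', hψ⟩ := this
      have hmem : ∀ i, (z - z') i ∈ maximalIdeal Z := by
        intro i
        have : residue Z (z' i) = residue Z (z i) := congrFun hψ i
        have : residue Z (z i - z' i) = 0 := by rw [map_sub, this, sub_self]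
        exact (Ideal.Quotient.eq_zero_iff_mem).mp this
      have hz'' : z - z' ∈ (maximalIdeal Z) • (⊤ : Submodule Z (Fin n → Z)) := by
        rw [pi_eq_sum_univ (z - z')]
        exact Submodule.sum_mem _ fun i _ =>
          Submodule.smul_mem_smul (hmem i) Submodule.mem_top
      have : z = z' + (z - z') := by ring
      rw [this]
      exact Submodule.add_mem _ (Submodule.mem_sup_left hz') (Submodule.mem_sup_right hz'')
    have := Submodule.le_of_le_smul_of_le_jacobson_bot (N := S j)
      (N' := (⊤ : Submodule Z (Fin n → Z))) Module.Finite.fg_top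
      ((IsLocalRing.jacobson_eq_maximalIdeal (⊥ : Ideal Z) bot_ne_top).ge) hle
    exact top_le_iff.mp this
  have : ∃ v : Fin n → k, ∀ j, v ∉ T j := by
    by_contra h
    push_neg at h
    have hcov : ⋃ j, ((T j : Set (Fin n → k))) = Set.univ := by
      apply Set.eq_univ_iff_forall.mpr
      intro v
      obtain ⟨j, hj⟩ := h v
      exact Set.mem_iUnion.mpr ⟨j, hj⟩
    obtain ⟨j, hj⟩ := Subspace.exists_eq_top_of_iUnion_eq_univ hcov
    exact hTne j hj
  obtain ⟨v, hv⟩ := this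
  choose z hzv using fun i => residue_surjective (R := Z) (v i)
  refine ⟨z, fun j hj => hv j ⟨z, hj, funext fun i => hzv i⟩⟩

end Statements
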